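/- Let V be a variety of a plural similarity type τ, and let B be a variety of Ω-bands of the same type. Let f(x,y) and g(x,y) be binary terms, each containing both variables x and y, such that f and g have the same first variable and the same last variable. If V satisfies the identities f(x,y) = x and g(x,y) = y, then the Mal'tsev product V ∘ B is a variety. -/

import Mathlib

structure Signature where
  symbols : Type
  arity : symbols → ℕ

structure Alg (S : Signature) where
  carrier : Type
  op : ∀ ω : S.symbols, (Fin (S.arity ω) → carrier) → carrier
  nonempty : Nonempty carrier

inductive Term (S : Signature) (X : Type) : Type
  | var : X → Term S X
  | app : ∀ ω : S.symbols, (Fin (S.arity ω) → Term S X) → Term S X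

def Term.eval {S : Signature} {X : Type} (A : Alg S) (env : X → A.carrier) :
    Term S X → A.carrier
  | .var x => env x
  | .app ω ts => A.op ω fun i => (ts i).eval A env

/-- The algebra `A` satisfies the identity `u = v`. -/
def Alg.sat {S : Signature} (A : Alg S) {X : Type} (u v : Term S X) : Prop :=
  ∀ env : X → A.carrier, u.eval A env = v.eval A env

/-- An identity: a pair of terms in the countably many variables `x₀, x₁, …`. -/
abbrev Ident (S : Signature) := Term S ℕ × Term S ℕ

/-- `A` lies in the variety axiomatized by the set of identities `E`. -/
def Alg.Models {S : Signature} (A : Alg S) (E : Set (Ident S)) : Prop :=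
  ∀ e ∈ E, A.sat e.1 e.2

/-- The identity `u = v` holds in the variety axiomatized by `E`. -/
def Conseq {S : Signature} (E : Set (Ident S)) {X : Type} (u v : Term S X) : Prop :=
  ∀ A : Alg S, A.Models E → A.sat u v

/-- `a` is an idempotent element of `A`. -/
def Alg.IsIdem {S : Signature} (A : Alg S) (a : A.carrier) : Prop :=
  ∀ ω : S.symbols, A.op ω (fun _ => a) = a

/-- `B` is (the universe of) a subalgebra of `A`. -/
def Alg.IsSubuniverse {S : Signature} (A : Alg S) (B : Set A.carrier) : Prop :=
  ∀ ω (a : Fin (S.arity ω) → A.carrier), (∀ i, a i ∈ B) → A.op ω a ∈ B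

/-- The subalgebra of `A` on a nonempty subuniverse `B`. -/
def Alg.subAlg {S : Signature} (A : Alg S) (B : Set A.carrier)
    (h : A.IsSubuniverse B) (hne : B.Nonempty) : Alg S where
  carrier := B
  op ω a := ⟨A.op ω fun i => (a i : A.carrier), h ω _ fun i => (a i).2⟩
  nonempty := hne.to_subtype

/-- A congruence of `A`: an equivalence relation compatible with all operations. -/
structure Congruence {S : Signature} (A : Alg S) where
  rel : A.carrier → A.carrier → Prop
  iseqv : Equivalence rel
  compat : ∀ ω (a b : Fin (S.arity ω) → A.carrier),
    (∀ i, rel (a i) (b i)) → rel (A.op ω a) (A.op ω b)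

def Congruence.setoid {S : Signature} {A : Alg S} (θ : Congruence A) :
    Setoid A.carrier := ⟨θ.rel, θ.iseqv⟩

/-- The quotient algebra `A/θ`. -/
noncomputable def Alg.quot {S : Signature} (A : Alg S) (θ : Congruence A) : Alg S where
  carrier := Quotient θ.setoid
  op ω q := Quotient.mk θ.setoid (A.op ω fun i => (q i).out)
  nonempty := A.nonempty.map (Quotient.mk θ.setoid)

/-- Membership in the Mal'tsev product of the varieties axiomatized by `V` and `W`:
`A` has a congruence `θ` with `A/θ` in (the variety of) `W` such that every
`θ`-class which is a subalgebra of `A` is an algebra in (the variety of) `V`. -/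
def InMaltsev {S : Signature} (V W : Set (Ident S)) (A : Alg S) : Prop :=
  ∃ θ : Congruence A, (A.quot θ).Models W ∧
    ∀ a : A.carrier, ∀ h : A.IsSubuniverse {b | θ.rel a b},
      (A.subAlg {b | θ.rel a b} h ⟨a, θ.iseqv.refl a⟩).Models V

/-- A class of algebras is a variety iff it is axiomatized by some set of identities. -/
def IsVarietyClass {S : Signature} (K : Alg S → Prop) : Prop :=
  ∃ E : Set (Ident S), ∀ A : Alg S, K A ↔ A.Models E

/-- `listProd mul x [y₁,…,yₖ] = x · y₁ · … · yₖ` (left-associated). -/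
def listProd {α : Type} (mul : α → α → α) : α → List α → α
  | x, [] => x
  | x, y :: l => listProd mul (mul x y) l

/-- `A` is an Ω-band: there is an associative idempotent binary operation `mul`
on `A` such that every (at least unary) basic operation of `A` is given by
`ω(x₁,…,xₙ) = x₁ · … · xₙ` (in particular `ω(x) = x` for unary `ω`). -/
def Alg.IsOmegaBand {S : Signature} (A : Alg S) : Prop :=
  ∃ mul : A.carrier → A.carrier → A.carrier,
    (∀ x, mul x x = x) ∧
    (∀ x y z, mul (mul x y) z = mul x (mul y z)) ∧
    ∀ (ω : S.symbols) (a : Fin (S.arity ω) → A.carrier) (h : 0 < S.arity ω),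
      A.op ω a = listProd mul (a ⟨0, h⟩) (List.ofFn a).tail

/-- The list of variables of a term in order of occurrence (with repetitions);
its head is the first variable of the term and its last entry the last
variable. -/
def Term.varList {S : Signature} {X : Type} : Term S X → List X
  | .var x => [x]
  | .app ω ts => (List.finRange (S.arity ω)).flatMap fun i => (ts i).varList


/-!
`V ∘ B` is axiomatized by the identities `u[σ] = v[σ]` where `V ⊨ u = v` and `σ` sends all
variables of `u` and `v` to terms that are equal in `B`. They hold in `V ∘ B`: the values of these
terms lie in one class of the congruence, and that class is a subalgebra, hence in `V`, because
Ω-bands are idempotent.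

Conversely, in a model `A` let `a ~ b` mean that `a` and `b` are values of two terms equal in `B`.
This relation is reflexive, symmetric and compatible, `A/~` lies in `B`, and `f(a, b) = a`,
`g(a, b) = b` whenever `a ~ b`. In a band a word in two letters is determined by its content and
its first and last letters, so `B ⊨ f = g`; this makes `~` transitive: if `a = t`, `b = s = t'`,
`c = s'` with `B ⊨ t = s, t' = s'`, then `B ⊨ f(t, t') = g(s, s')`, and these evaluate to `a`
and `c`. Finally, a `~`-class is in `V`: given elements `b₁, …, bₙ` of it, let `z` be a term
containing all of them (τ is plural); each `bᵢ` is the value of `f(g(z, bᵢ), z)`, and in a band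
these terms all equal `z`, because `z c z = z` whenever `c` occurs in `z`.
-/

namespace Term

variable {S : Signature} {X Y : Type}

def subst (σ : X → Term S Y) : Term S X → Term S Y
  | .var x => σ x
  | .app ω ts => .app ω fun i => (ts i).subst σ

theorem eval_subst (A : Alg S) (σ : X → Term S Y) (env : Y → A.carrier) :
    ∀ t : Term S X, (t.subst σ).eval A env = t.eval A fun x => (σ x).eval A env
  | .var _ => rfl
  | .app ω ts => congrArg (A.op ω) (funext fun i => eval_subst A σ env (ts i))

theorem eval_subst_pair (A : Alg S) (t : Term S (Fin 2)) (s₀ s₁ : Term S Y)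
    (env : Y → A.carrier) :
    (t.subst ![s₀, s₁]).eval A env = t.eval A ![s₀.eval A env, s₁.eval A env] := by
  rw [eval_subst]
  congr 1
  funext i
  fin_cases i <;> rfl

theorem mem_varList_app {ω : S.symbols} {ts : Fin (S.arity ω) → Term S X} {x : X} :
    x ∈ (Term.app ω ts).varList ↔ ∃ i, x ∈ (ts i).varList := by
  simp [varList]

theorem eval_congr (A : Alg S) {env₁ env₂ : X → A.carrier} :
    ∀ t : Term S X, (∀ x ∈ t.varList, env₁ x = env₂ x) →
      t.eval A env₁ = t.eval A env₂
  | .var x, h => h x (List.mem_singleton_self x)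
  | .app ω ts, h => congrArg (A.op ω) <| funext fun i =>
      eval_congr A (ts i) fun x hx => h x (mem_varList_app.2 ⟨i, hx⟩)

theorem varList_ne_nil (h0 : ∀ ω : S.symbols, 0 < S.arity ω) :
    ∀ t : Term S X, t.varList ≠ []
  | .var _ => List.cons_ne_nil _ _
  | .app ω ts => by
      obtain ⟨x, hx⟩ := List.exists_mem_of_ne_nil _ (varList_ne_nil h0 (ts ⟨0, h0 ω⟩))
      exact List.ne_nil_of_mem (mem_varList_app.2 ⟨_, hx⟩)

theorem eval_mem_of_isSubuniverse {A : Alg S} {C : Set A.carrier} (hC : A.IsSubuniverse C)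
    {env : X → A.carrier} :
    ∀ t : Term S X, (∀ x ∈ t.varList, env x ∈ C) → t.eval A env ∈ C
  | .var x, h => h x (List.mem_singleton_self x)
  | .app ω ts, h => hC ω _ fun i =>
      eval_mem_of_isSubuniverse hC (ts i) fun x hx => h x (mem_varList_app.2 ⟨i, hx⟩)

def binApp (ω : S.symbols) (s t : Term S X) : Term S X :=
  .app ω fun i => if (i : ℕ) = 0 then s else t

theorem mem_varList_binApp {ω : S.symbols} (hω : 2 ≤ S.arity ω) {s t : Term S X} {x : X} :
    x ∈ (binApp ω s t).varList ↔ x ∈ s.varList ∨ x ∈ t.varList := by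
  simp only [binApp, mem_varList_app]
  constructor
  · rintro ⟨i, hi⟩
    split_ifs at hi
    exacts [Or.inl hi, Or.inr hi]
  · rintro (hx | hx)
    exacts [⟨⟨0, by omega⟩, by simpa using hx⟩, ⟨⟨1, hω⟩, by simpa using hx⟩]

theorem exists_varList_mem_iff (hplural : ∃ ω : S.symbols, 2 ≤ S.arity ω) :
    ∀ L : List X, L ≠ [] → ∃ t : Term S X, ∀ x, x ∈ t.varList ↔ x ∈ L
  | [], h => absurd rfl h
  | [y], _ => ⟨.var y, fun _ => Iff.rfl⟩
  | y :: z :: L, _ => by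
      obtain ⟨t, ht⟩ := exists_varList_mem_iff hplural (z :: L) (List.cons_ne_nil _ _)
      obtain ⟨ω, hω⟩ := hplural
      refine ⟨binApp ω (.var y) t, fun x => ?_⟩
      rw [mem_varList_binApp hω, ht, List.mem_cons (l := z :: L)]
      simp [varList]

end Term

section Conseq

variable {S : Signature} {E : Set (Ident S)} {X Y : Type}

theorem Conseq.refl (t : Term S X) : Conseq E t t := fun _ _ _ => rfl

theorem Conseq.symm {t s : Term S X} (h : Conseq E t s) : Conseq E s t :=
  fun A hA env => (h A hA env).symm

theorem Conseq.subst {u v : Term S X} (h : Conseq E u v) {σ τ : X → Term S Y}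
    (hστ : ∀ x, Conseq E (σ x) (τ x)) : Conseq E (u.subst σ) (v.subst τ) := by
  intro A hA env
  rw [Term.eval_subst, Term.eval_subst, funext fun x => hστ x A hA env]
  exact h A hA _

theorem Conseq.trans {t s r : Term S X} (h₁ : Conseq E t s) (h₂ : Conseq E s r) :
    Conseq E t r :=
  fun A hA env => (h₁ A hA env).trans (h₂ A hA env)

end Conseq

section Subalgebra

variable {S : Signature} {A : Alg S} {C : Set A.carrier} {X : Type}

theorem Alg.val_eval_subAlg (hC : A.IsSubuniverse C) (hne : C.Nonempty) :
    ∀ (t : Term S X) (env : X → (A.subAlg C hC hne).carrier),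
      (t.eval (A.subAlg C hC hne) env).1 = t.eval A fun x => (env x).1
  | .var _, _ => rfl
  | .app ω ts, env => congrArg (A.op ω) (funext fun i => val_eval_subAlg hC hne (ts i) env)

theorem Alg.IsSubuniverse.eval_eq_of_sat (hC : A.IsSubuniverse C) (hne : C.Nonempty)
    {u v : Term S X} (hsat : (A.subAlg C hC hne).sat u v) {env : X → A.carrier}
    (henv : ∀ x ∈ u.varList ++ v.varList, env x ∈ C) : u.eval A env = v.eval A env := by
  classical
  let env' : X → (A.subAlg C hC hne).carrier := fun x =>
    if hx : env x ∈ C then ⟨env x, hx⟩ else ⟨hne.some, hne.some_mem⟩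
  have hval : ∀ t : Term S X, (∀ x ∈ t.varList, env x ∈ C) →
      (t.eval (A.subAlg C hC hne) env').1 = t.eval A env := fun t ht => by
    rw [Alg.val_eval_subAlg]
    exact Term.eval_congr A t fun x hx => by simp [env', ht x hx]
  rw [← hval u fun x hx => henv x (List.mem_append_left _ hx),
    ← hval v fun x hx => henv x (List.mem_append_right _ hx), hsat env']

end Subalgebra

namespace Congruence

variable {S : Signature} {A : Alg S} (θ : Congruence A)

theorem quot_op_mk (ω : S.symbols) (a : Fin (S.arity ω) → A.carrier) :
    (A.quot θ).op ω (fun i => Quotient.mk θ.setoid (a i)) = Quotient.mk θ.setoid (A.op ω a) :=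
  Quotient.sound <| θ.compat ω _ a fun i => @Quotient.mk_out _ θ.setoid (a i)

theorem quot_eval_mk {X : Type} :
    ∀ (t : Term S X) (env : X → A.carrier),
      t.eval (A.quot θ) (fun x => Quotient.mk θ.setoid (env x))
        = Quotient.mk θ.setoid (t.eval A env)
  | .var _, _ => rfl
  | .app ω ts, env => by
      show (A.quot θ).op ω (fun i => (ts i).eval (A.quot θ) _) = _
      simp only [quot_eval_mk (ts _) env, quot_op_mk]
      rfl

theorem rel_eval_of_conseq {E : Set (Ident S)} (hθ : (A.quot θ).Models E) {X : Type}
    {t s : Term S X} (h : Conseq E t s) (env : X → A.carrier) :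
    θ.rel (t.eval A env) (s.eval A env) := by
  have := h (A.quot θ) hθ fun x => Quotient.mk θ.setoid (env x)
  rw [quot_eval_mk, quot_eval_mk] at this
  exact Quotient.exact this

theorem isSubuniverse_class (hθ : ∀ q, (A.quot θ).IsIdem q) (a : A.carrier) :
    A.IsSubuniverse {b | θ.rel a b} := by
  intro ω b hb
  have hconst : (fun i => Quotient.mk θ.setoid (b i)) = fun _ => Quotient.mk θ.setoid a :=
    funext fun i => (Quotient.sound (hb i)).symm
  have := (quot_op_mk θ ω b).symm.trans (hconst ▸ hθ (Quotient.mk θ.setoid a) ω)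
  exact θ.iseqv.symm (Quotient.exact this)

end Congruence

theorem List.exists_nat_coding {Y α : Type} [Nonempty α] (L : List Y) (g : Y → α) :
    ∃ (ρ : Y → ℕ) (g' : ℕ → α), ∀ y ∈ L, g' (ρ y) = g y := by
  classical
  obtain ⟨ρ, hρ⟩ := Set.countable_iff_exists_injOn.1 L.finite_toSet.countable
  refine ⟨ρ, fun n => if h : ∃ y ∈ L, ρ y = n then g h.choose else Classical.arbitrary α,
    fun y hy => ?_⟩
  have h : ∃ y' ∈ L, ρ y' = ρ y := ⟨y, hy, rfl⟩
  simp only [dif_pos h]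
  rw [hρ h.choose_spec.1 hy h.choose_spec.2]

section IdempotentMonoid

variable {M : Type} [Monoid M] (hM : ∀ x : M, IsIdempotentElem x)
include hM

theorem List.prod_eq_of_forall_eq {l : List M} {a : M} (hl : l ≠ []) (h : ∀ x ∈ l, x = a) :
    l.prod = a := by
  obtain ⟨n, hn⟩ := Nat.exists_eq_succ_of_ne_zero (List.length_pos_iff.2 hl).ne'
  rw [List.prod_eq_pow_card l a h, hn, (hM a).pow_succ_eq]

theorem mul_mul_mul_eq_of_mem_pair {a b c d : M} (hc : c = a ∨ c = b) (hd : d = a ∨ d = b) :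
    a * b * c * d = a * b * d := by
  have hxx : ∀ x : M, x * x = x := fun x => hM x
  have hxy : ∀ x y : M, x * (y * (x * y)) = x * y := fun x y => by rw [← mul_assoc, hxx]
  rcases hc with rfl | rfl <;> rcases hd with rfl | rfl <;> simp only [mul_assoc, hxx, hxy]

theorem List.prod_eq_mul_mul_of_forall_mem_pair {a b : M} :
    ∀ {w : List M} {c : M}, w.head? = some a → w.getLast? = some c → b ∈ w →
      (∀ x ∈ w, x = a ∨ x = b) → w.prod = a * b * c := by
  intro w
  induction w using List.reverseRecOn with
  | nil => simp
  | append_singleton w d ih =>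
    intro c ha hc hb hw
    obtain rfl : d = c := by simpa using hc
    by_cases hne : w = []
    · subst hne
      obtain rfl : a = d := by simpa using ha.symm
      obtain rfl : b = a := by simpa using hb
      simp only [(hM b).eq, List.nil_append, List.prod_singleton]
    have ha' : w.head? = some a := by
      rw [List.head?_append, Option.or_eq_some_iff] at ha
      simpa [List.head?_eq_none_iff, hne] using ha
    have hw' : ∀ x ∈ w, x = a ∨ x = b := fun x hx => hw x (List.mem_append_left _ hx)
    rw [List.prod_append, List.prod_singleton]
    by_cases hbw : b ∈ w
    · rw [ih ha' (List.getLast?_eq_some_getLast hne) hbw hw', mul_mul_mul_eq_of_mem_pair hM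
        (hw' _ (List.getLast_mem hne)) (hw d (by simp))]
    · have hwa : w.prod = a := List.prod_eq_of_forall_eq hM hne fun x hx =>
        (hw' x hx).resolve_right fun hxb => hbw (hxb ▸ hx)
      obtain rfl : b = d := by simpa [hbw] using hb
      rw [hwa, mul_assoc, (hM b).eq]

theorem List.prod_mul_mul_prod_of_mem {w : List M} {c : M} (hc : c ∈ w) :
    w.prod * c * w.prod = w.prod := by
  obtain ⟨l₁, l₂, rfl⟩ := List.append_of_mem hc
  set z := (l₁ ++ c :: l₂).prod
  have hz : z = l₁.prod * (c * l₂.prod) := by simp [z]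
  have hzc : z * c * l₂.prod = z := by
    rw [mul_assoc z c, hz, mul_assoc, (hM _).eq]
  calc z * c * z = z * c * (z * c * l₂.prod) := by rw [hzc]
    _ = z * c * (z * c) * l₂.prod := by simp only [mul_assoc]
    _ = z := by rw [(hM _).eq, hzc]

end IdempotentMonoid

section OmegaBand

variable {S : Signature}

theorem WithOne.coe_listProd {α : Type} [Semigroup α] :
    ∀ (x : α) (l : List α),
      ((listProd (· * ·) x l : α) : WithOne α) = x * (l.map (↑)).prod
  | _, [] => by simp [listProd]
  | x, y :: l => by simp [listProd, WithOne.coe_listProd (x * y) l, mul_assoc]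

theorem List.prod_flatMap {α M : Type} [Monoid M] (l : List α) (F : α → List M) :
    (l.flatMap F).prod = (l.map fun a => (F a).prod).prod := by
  rw [List.flatMap_def, List.prod_flatten, List.map_map]
  rfl

theorem Term.coe_eval_eq_prod {A : Alg S} [Semigroup A.carrier] (h0 : ∀ ω, 0 < S.arity ω)
    (hop : ∀ ω (a : Fin (S.arity ω) → A.carrier),
      A.op ω a = listProd (· * ·) (a ⟨0, h0 ω⟩) (List.ofFn a).tail) {X : Type} :
    ∀ (t : Term S X) (env : X → A.carrier),
      ((t.eval A env : A.carrier) : WithOne A.carrier) =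
        (t.varList.map fun x => (env x : WithOne A.carrier)).prod
  | .var x, env => by simp [Term.varList, Term.eval]
  | .app ω ts, env => by
      have hne : List.ofFn (fun i => (ts i).eval A env) ≠ [] := by simpa using (h0 ω).ne'
      have hop' := hop ω fun i => (ts i).eval A env
      rw [← List.head_ofFn (h := hne)] at hop'
      show ((A.op ω fun i => (ts i).eval A env : A.carrier) : WithOne A.carrier) = _
      rw [hop', WithOne.coe_listProd, ← List.prod_cons, ← List.map_cons, List.cons_head_tail,
        List.map_ofFn, List.ofFn_eq_map, Term.varList, List.map_flatMap, List.prod_flatMap]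
      congr 1
      exact List.map_congr_left fun i _ => Term.coe_eval_eq_prod h0 hop (ts i) env

theorem Alg.IsOmegaBand.exists_idempotent_monoid (h0 : ∀ ω, 0 < S.arity ω) {A : Alg S}
    (hA : A.IsOmegaBand) :
    ∃ (M : Type) (_ : Monoid M) (ι : A.carrier → M), (∀ x : M, IsIdempotentElem x) ∧
      Function.Injective ι ∧ ∀ {X : Type} (t : Term S X) (env : X → A.carrier),
        ι (t.eval A env) = (t.varList.map (ι ∘ env)).prod := by
  obtain ⟨mul, idem, assoc, hop⟩ := hA
  let _ : Semigroup A.carrier := { mul := mul, mul_assoc := assoc }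
  refine ⟨WithOne A.carrier, inferInstance, (↑), fun x => ?_, WithOne.coe_injective,
    fun t env => Term.coe_eval_eq_prod h0 (fun ω a => hop ω a (h0 ω)) t env⟩
  induction x with
  | one => exact IsIdempotentElem.one
  | coe a => exact congrArg ((↑) : A.carrier → WithOne A.carrier) (idem a)

theorem Alg.IsOmegaBand.isIdem (h0 : ∀ ω, 0 < S.arity ω) {A : Alg S} (hA : A.IsOmegaBand)
    (a : A.carrier) : A.IsIdem a := by
  obtain ⟨M, _, ι, hM, hι, heval⟩ := hA.exists_idempotent_monoid h0
  intro ω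
  apply hι
  refine (heval (.app ω fun _ => .var ()) fun _ => a).trans
    (List.prod_eq_of_forall_eq hM ?_ fun x hx => ?_)
  · exact List.map_eq_nil_iff.not.2 (Term.varList_ne_nil h0 _)
  · obtain ⟨_, -, rfl⟩ := List.mem_map.1 hx
    rfl

end OmegaBand

def List.IsBinaryWord (w : List (Fin 2)) (p q : Fin 2) : Prop :=
  0 ∈ w ∧ 1 ∈ w ∧ w.head? = some p ∧ w.getLast? = some q

section BinaryWord

variable {M : Type} [Monoid M]

def binaryBandNF (p q : Fin 2) (a b : M) : M :=
  ![a, b] p * ![a, b] p.rev * ![a, b] q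

variable (hM : ∀ x : M, IsIdempotentElem x)
include hM

theorem List.IsBinaryWord.prod_map {w : List (Fin 2)} {p q : Fin 2} (hw : w.IsBinaryWord p q)
    (x : Fin 2 → M) : (w.map x).prod = binaryBandNF p q (x 0) (x 1) := by
  obtain ⟨h0, h1, hp, hq⟩ := hw
  have hx : ∀ i : Fin 2, x i = ![x 0, x 1] i := fun i => by fin_cases i <;> rfl
  simp only [binaryBandNF, ← hx]
  refine List.prod_eq_mul_mul_of_forall_mem_pair hM (by simp [hp]) (by simp [hq]) ?_ ?_
  · exact List.mem_map_of_mem (by fin_cases p <;> assumption)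
  · simp only [List.mem_map]
    rintro _ ⟨i, -, rfl⟩
    fin_cases p <;> fin_cases i <;> simp

theorem binaryBandNF_binaryBandNF {z c : M} (h : z * c * z = z) (p q : Fin 2) :
    binaryBandNF p q (binaryBandNF p q z c) z = z := by
  have hxx : ∀ x : M, x * x = x := fun x => hM x
  have h' : ∀ y : M, z * (c * (z * y)) = z * y := fun y => by
    rw [← mul_assoc, ← mul_assoc, h]
  simp only [mul_assoc] at h
  fin_cases p <;> fin_cases q <;> simp [binaryBandNF, mul_assoc, hxx, h, h']

end BinaryWord

section BandConsequences

variable {S : Signature} {B : Set (Ident S)} (h0 : ∀ ω, 0 < S.arity ω)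
  (hB : ∀ A : Alg S, A.Models B → A.IsOmegaBand)
include h0 hB

theorem conseq_of_isBinaryWord {f g : Term S (Fin 2)} {p q : Fin 2}
    (hf : f.varList.IsBinaryWord p q) (hg : g.varList.IsBinaryWord p q) : Conseq B f g := by
  intro A hA env
  obtain ⟨M, _, ι, hM, hι, heval⟩ := (hB A hA).exists_idempotent_monoid h0
  apply hι
  rw [heval, heval, hf.prod_map hM, hg.prod_map hM]

theorem conseq_subst_subst_of_mem {f g : Term S (Fin 2)} {p q : Fin 2}
    (hf : f.varList.IsBinaryWord p q) (hg : g.varList.IsBinaryWord p q) {Y : Type}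
    (z : Term S Y) {y : Y} (hy : y ∈ z.varList) :
    Conseq B (f.subst ![g.subst ![z, .var y], z]) z := by
  intro A hA env
  obtain ⟨M, _, ι, hM, hι, heval⟩ := (hB A hA).exists_idempotent_monoid h0
  have hz : ι (z.eval A env) * ι (env y) * ι (z.eval A env) = ι (z.eval A env) := by
    rw [heval]
    exact List.prod_mul_mul_prod_of_mem hM (List.mem_map_of_mem hy)
  apply hι
  rw [Term.eval_subst_pair, heval, hf.prod_map hM, Function.comp_apply, Function.comp_apply,
    Matrix.cons_val_zero, Matrix.cons_val_one, Matrix.cons_val_zero, Term.eval_subst_pair, heval,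
    hg.prod_map hM]
  exact binaryBandNF_binaryBandNF hM hz p q

end BandConsequences

section MaltsevIdentities

variable {S : Signature}

def ConseqConstOn (E : Set (Ident S)) {X Y : Type} (σ : X → Term S Y) (L : List X) : Prop :=
  ∀ x ∈ L, ∀ y ∈ L, Conseq E (σ x) (σ y)

def maltsevIdentities (V B : Set (Ident S)) : Set (Ident S) :=
  {e | ∃ (X : Type) (u v : Term S X) (σ : X → Term S ℕ), Conseq V u v ∧
    ConseqConstOn B σ (u.varList ++ v.varList) ∧ e = (u.subst σ, v.subst σ)}

variable {V B : Set (Ident S)} {A : Alg S}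

theorem InMaltsev.models_maltsevIdentities (h0 : ∀ ω, 0 < S.arity ω)
    (hB : ∀ A : Alg S, A.Models B → A.IsOmegaBand) (hA : InMaltsev V B A) :
    A.Models (maltsevIdentities V B) := by
  obtain ⟨θ, hθB, hθV⟩ := hA
  have hsub : ∀ a, A.IsSubuniverse {b | θ.rel a b} :=
    θ.isSubuniverse_class fun q => (hB _ hθB).isIdem h0 q
  rintro _ ⟨X, u, v, σ, huv, hσ, rfl⟩ env
  obtain ⟨x₀, hx₀⟩ := List.exists_mem_of_ne_nil _ (Term.varList_ne_nil h0 u)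
  show (u.subst σ).eval A env = (v.subst σ).eval A env
  rw [Term.eval_subst, Term.eval_subst]
  exact (hsub _).eval_eq_of_sat ⟨_, θ.iseqv.refl _⟩ (huv _ (hθV _ (hsub _))) fun x hx =>
    θ.rel_eval_of_conseq hθB (hσ x₀ (List.mem_append_left _ hx₀) x hx) env

theorem Alg.Models.sat_subst (hA : A.Models (maltsevIdentities V B)) {X Y : Type}
    {u v : Term S X} (huv : Conseq V u v) {σ : X → Term S Y}
    (hσ : ConseqConstOn B σ (u.varList ++ v.varList)) : A.sat (u.subst σ) (v.subst σ) := by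
  intro env
  have := A.nonempty
  obtain ⟨ρ, env', henv'⟩ :=
    ((u.varList ++ v.varList).flatMap fun x => (σ x).varList).exists_nat_coding env
  let σ' : X → Term S ℕ := fun x => (σ x).subst fun y => .var (ρ y)
  have hσ' : ConseqConstOn B σ' (u.varList ++ v.varList) := fun x hx y hy =>
    (hσ x hx y hy).subst fun _ => .refl _
  have hval : ∀ x ∈ u.varList ++ v.varList, (σ' x).eval A env' = (σ x).eval A env :=
    fun x hx => by
      rw [Term.eval_subst]
      exact Term.eval_congr A _ fun y hy => henv' y (List.mem_flatMap.2 ⟨x, hx, hy⟩)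
  have h := hA _ ⟨X, u, v, σ', huv, hσ', rfl⟩ env'
  simp only [Term.eval_subst] at h ⊢
  rwa [Term.eval_congr A u fun x hx => hval x (List.mem_append_left _ hx),
    Term.eval_congr A v fun x hx => hval x (List.mem_append_right _ hx)] at h

end MaltsevIdentities

section ConseqRel

variable {S : Signature} {B : Set (Ident S)} {A : Alg S}

def ConseqRel (B : Set (Ident S)) (A : Alg S) (a b : A.carrier) : Prop :=
  ∃ t s : Term S A.carrier, Conseq B t s ∧ t.eval A id = a ∧ s.eval A id = b

theorem ConseqRel.of_conseq {X : Type} {t s : Term S X} (h : Conseq B t s)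
    (env : X → A.carrier) :
    ConseqRel B A (t.eval A env) (s.eval A env) :=
  ⟨t.subst (.var ∘ env), s.subst (.var ∘ env), h.subst fun _ => .refl _,
    Term.eval_subst _ _ _ t, Term.eval_subst _ _ _ s⟩

theorem ConseqRel.refl (a : A.carrier) : ConseqRel B A a a :=
  ⟨.var a, .var a, .refl _, rfl, rfl⟩

theorem ConseqRel.symm {a b : A.carrier} (h : ConseqRel B A a b) : ConseqRel B A b a :=
  let ⟨t, s, hts, ht, hs⟩ := h
  ⟨s, t, hts.symm, hs, ht⟩

theorem ConseqRel.op (ω : S.symbols) (a b : Fin (S.arity ω) → A.carrier)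
    (h : ∀ i, ConseqRel B A (a i) (b i)) : ConseqRel B A (A.op ω a) (A.op ω b) := by
  choose t s hts ht hs using h
  exact ⟨.app ω t, .app ω s,
    fun A' hA' env => congrArg (A'.op ω) (funext fun i => hts i A' hA' env),
    congrArg (A.op ω) (funext ht), congrArg (A.op ω) (funext hs)⟩

theorem Congruence.quot_models_of_conseqRel (θ : Congruence A)
    (hθ : ∀ a b, ConseqRel B A a b → θ.rel a b) : (A.quot θ).Models B := by
  rintro ⟨u, v⟩ huv env
  have henv : env = fun n => Quotient.mk θ.setoid (env n).out :=
    funext fun n => (Quotient.out_eq (env n)).symm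
  show u.eval (A.quot θ) env = v.eval (A.quot θ) env
  rw [henv, θ.quot_eval_mk, θ.quot_eval_mk]
  exact Quotient.sound (hθ _ _ (ConseqRel.of_conseq (fun A' hA' => hA' _ huv) _))

end ConseqRel

namespace Alg.Models

variable {S : Signature} {V B : Set (Ident S)} {A : Alg S}
  (hA : A.Models (maltsevIdentities V B))
include hA

theorem eval_eq_of_conseqRel {t : Term S (Fin 2)} {i : Fin 2} (ht : Conseq V t (.var i))
    {a b : A.carrier} (hab : ConseqRel B A a b) : t.eval A ![a, b] = ![a, b] i := by
  obtain ⟨s₀, s₁, hs, rfl, rfl⟩ := hab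
  have hσ : ConseqConstOn B ![s₀, s₁] (t.varList ++ [i]) := by
    intro x _ y _
    fin_cases x <;> fin_cases y
    exacts [.refl _, hs, hs.symm, .refl _]
  have h := hA.sat_subst ht hσ id
  rw [Term.eval_subst_pair] at h
  rw [h]
  fin_cases i <;> rfl

variable {f g : Term S (Fin 2)} (hf : Conseq V f (.var 0)) (hg : Conseq V g (.var 1))
  (hfg : Conseq B f g)
include hf hg hfg

theorem conseqRel_trans {a b c : A.carrier} (hab : ConseqRel B A a b)
    (hbc : ConseqRel B A b c) : ConseqRel B A a c := by
  have hfab := hA.eval_eq_of_conseqRel hf hab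
  have hgbc := hA.eval_eq_of_conseqRel hg hbc
  obtain ⟨t, s, hts, rfl, rfl⟩ := hab
  obtain ⟨t', s', hts', ht', rfl⟩ := hbc
  refine ⟨f.subst ![t, t'], g.subst ![s, s'], hfg.subst (Fin.forall_fin_two.2 ⟨hts, hts'⟩),
    ?_, ?_⟩
  · rw [Term.eval_subst_pair, ht']
    exact hfab
  · rw [Term.eval_subst_pair]
    exact hgbc

theorem subAlg_conseqRel_models (hplural : ∃ ω : S.symbols, 2 ≤ S.arity ω)
    (habs : ∀ (z : Term S A.carrier) (y : A.carrier), y ∈ z.varList →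
      Conseq B (f.subst ![g.subst ![z, .var y], z]) z)
    {a : A.carrier} (hC : A.IsSubuniverse {b | ConseqRel B A a b})
    (hne : {b | ConseqRel B A a b}.Nonempty) :
    (A.subAlg {b | ConseqRel B A a b} hC hne).Models V := by
  rintro ⟨u, v⟩ huv env
  apply Subtype.ext
  rw [Alg.val_eval_subAlg, Alg.val_eval_subAlg]
  obtain ⟨z, hz⟩ := Term.exists_varList_mem_iff hplural
    (a :: (u.varList ++ v.varList).map fun n => (env n).1) (List.cons_ne_nil _ _)
  have haz : ConseqRel B A a (z.eval A id) := Term.eval_mem_of_isSubuniverse hC z fun x hx => by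
    rcases List.mem_cons.1 ((hz x).1 hx) with rfl | hx
    · exact ConseqRel.refl _
    · obtain ⟨n, -, rfl⟩ := List.mem_map.1 hx
      exact (env n).2
  let σ : ℕ → Term S A.carrier := fun n => f.subst ![g.subst ![z, .var (env n).1], z]
  have hσ : ∀ n, (σ n).eval A id = (env n).1 := fun n => by
    have hzn := hA.conseqRel_trans hf hg hfg haz.symm (env n).2
    simp only [σ, Term.eval_subst_pair, Term.eval, id]
    rw [hA.eval_eq_of_conseqRel hg hzn]
    exact hA.eval_eq_of_conseqRel hf hzn.symm
  have hmem : ∀ n ∈ u.varList ++ v.varList, (env n).1 ∈ z.varList := fun n hn =>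
    (hz _).2 (List.mem_cons_of_mem _ (List.mem_map_of_mem hn))
  have hσB : ConseqConstOn B σ (u.varList ++ v.varList) := fun i hi j hj =>
    (habs z _ (hmem i hi)).trans (habs z _ (hmem j hj)).symm
  have h := hA.sat_subst (fun A' hA' => hA' _ huv) hσB id
  rwa [Term.eval_subst, Term.eval_subst, funext hσ] at h

theorem inMaltsev (hplural : ∃ ω : S.symbols, 2 ≤ S.arity ω)
    (habs : ∀ (z : Term S A.carrier) (y : A.carrier), y ∈ z.varList →
      Conseq B (f.subst ![g.subst ![z, .var y], z]) z) :
    InMaltsev V B A :=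
  let θ : Congruence A :=
    ⟨ConseqRel B A, ⟨ConseqRel.refl, ConseqRel.symm, hA.conseqRel_trans hf hg hfg⟩,
      ConseqRel.op⟩
  ⟨θ, θ.quot_models_of_conseqRel fun _ _ => id,
    fun _ hC => hA.subAlg_conseqRel_models hf hg hfg hplural habs hC _⟩

end Alg.Models

/-- Let `V` be a variety of a plural type `τ` and `B` a variety
of Ω-bands of the same type. Let `f(x,y)` and `g(x,y)` be binary terms, each
containing both variables, with the same first variable and the same last
variable. If `V ⊨ f(x,y) = x` and `V ⊨ g(x,y) = y`, then the Mal'tsev product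
`V ∘ B` is a variety. -/
theorem stmt_17 (S : Signature) (h0 : ∀ ω : S.symbols, 0 < S.arity ω)
    (hplural : ∃ ω : S.symbols, 2 ≤ S.arity ω)
    (V B : Set (Ident S))
    (hB : ∀ A : Alg S, A.Models B → A.IsOmegaBand)
    (f g : Term S (Fin 2))
    (hfx : (0 : Fin 2) ∈ f.varList) (hfy : (1 : Fin 2) ∈ f.varList)
    (hgx : (0 : Fin 2) ∈ g.varList) (hgy : (1 : Fin 2) ∈ g.varList)
    (hfirst : f.varList.head? = g.varList.head?)
    (hlast : f.varList.getLast? = g.varList.getLast?)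
    (hf : Conseq V f (Term.var 0))
    (hg : Conseq V g (Term.var 1)) :
    IsVarietyClass (InMaltsev V B) := by
  have hne : f.varList ≠ [] := List.ne_nil_of_mem hfx
  obtain ⟨p, hp⟩ := Option.isSome_iff_exists.1 (List.isSome_head?.2 hne)
  obtain ⟨q, hq⟩ := Option.isSome_iff_exists.1 (List.getLast?_isSome.2 hne)
  have hf' : f.varList.IsBinaryWord p q := ⟨hfx, hfy, hp, hq⟩
  have hg' : g.varList.IsBinaryWord p q := ⟨hgx, hgy, hfirst ▸ hp, hlast ▸ hq⟩
  refine ⟨maltsevIdentities V B, fun A =>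
    ⟨InMaltsev.models_maltsevIdentities h0 hB, fun hA => ?_⟩⟩
  exact hA.inMaltsev hf hg (conseq_of_isBinaryWord h0 hB hf' hg') hplural
    fun z _ hy => conseq_subst_subst_of_mem h0 hB hf' hg' z hy
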